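/- arXiv:1502.01738 — 2 statements merged into one kernel-verified Lean document; each statement's English description precedes it below -/
import Mathlib

section
/- Let a(w,v) = Σ_κ [ (∇w,∇v)_κ − ½(∇w,⟦v⟧)_{∂κ} − (θ/2)(⟦w⟧,∇v)_{∂κ} + (γ_κ/2)(⟦w⟧,⟦v⟧)_{∂κ} ] be the interior penalty DG bilinear form with penalty γ_κ > 0 satisfying γ_κ ≥ ½(1+θ)² d_κ², where d_κ = sup_{v_N ∈ V_N(κ)} ‖∇v_N·n_κ‖_{∂κ}/‖v_N‖_⋆ is the local inverse trace constant. Then a is coercive on V_N: for all v_N ∈ V_N, ½ |||v_N|||² ≤ a(v_N, v_N), where |||v|||² = Σ_κ [ ‖∇v‖²_κ + (γ_κ/2)‖⟦v⟧‖²_{∂κ} ]. -/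
/-!
On each element the form splits as `a_κ(v,v) = ‖∇v‖² − ((1+θ)/2)(∇v·n, ⟦v⟧) + (γ_κ/2)‖⟦v⟧‖²`.
Since `V_N(κ)` contains the constants, which are invisible to `∇` and `∇·n`, subtracting the mean
sharpens the inverse trace inequality to `‖∇v·n‖_{∂κ} ≤ d_κ ‖∇v‖_κ`. Cauchy–Schwarz and
`ab ≤ a²/2 + b²/2` then bound the cross term by `½‖∇v‖² + ((1+θ)²d_κ²/8)‖⟦v⟧‖²`, and the penalty
condition absorbs the second summand into half of the jump term.
-/

open RealInnerProductSpace

noncomputable def starNorm {H F : Type*} [AddCommGroup H] [Module ℝ H]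
    [SeminormedAddCommGroup F] [Module ℝ F] (m : H →ₗ[ℝ] ℝ) (S : H →ₗ[ℝ] F) (v : H) : ℝ :=
  √((m v) ^ 2 + ‖S v‖ ^ 2)

theorem norm_le_mul_norm_of_le_mul_starNorm {H E F : Type*} [AddCommGroup H] [Module ℝ H]
    [SeminormedAddCommGroup E] [Module ℝ E] [SeminormedAddCommGroup F] [Module ℝ F]
    {V : Submodule ℝ H} (T : H →ₗ[ℝ] E) (S : H →ₗ[ℝ] F) (m : H →ₗ[ℝ] ℝ) {d : ℝ}
    (hd : ∀ w ∈ V, ‖T w‖ ≤ d * starNorm m S w)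
    {e : H} (he : e ∈ V) (hTe : T e = 0) (hSe : S e = 0) (hme : m e ≠ 0)
    {v : H} (hv : v ∈ V) :
    ‖T v‖ ≤ d * ‖S v‖ := by
  set w := v - (m v / m e) • e
  have hmw : m w = 0 := by
    simp only [w, map_sub, map_smul, smul_eq_mul, div_mul_cancel₀ _ hme, sub_self]
  have hSw : S w = S v := by simp [w, hSe]
  have hTw : T w = T v := by simp [w, hTe]
  simpa [starNorm, hmw, hSw, hTw] using hd w (V.sub_mem hv (V.smul_mem _ he))

theorem mul_inner_le_of_norm_le {E F : Type*} [SeminormedAddCommGroup E] [InnerProductSpace ℝ E]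
    [SeminormedAddCommGroup F] {n j : E} {x : F} {θ d γ : ℝ}
    (hn : ‖n‖ ≤ d * ‖x‖) (hγ : (1 / 2) * (1 + θ) ^ 2 * d ^ 2 ≤ γ) :
    (1 + θ) / 2 * ⟪n, j⟫ ≤ (1 / 2) * ‖x‖ ^ 2 + γ / 4 * ‖j‖ ^ 2 := by
  calc (1 + θ) / 2 * ⟪n, j⟫
      ≤ |(1 + θ) / 2 * ⟪n, j⟫| := le_abs_self _
    _ = |1 + θ| / 2 * |⟪n, j⟫| := by rw [abs_mul, abs_div, abs_two]
    _ ≤ |1 + θ| / 2 * (‖n‖ * ‖j‖) := by gcongr; exact abs_real_inner_le_norm n j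
    _ ≤ |1 + θ| / 2 * (d * ‖x‖ * ‖j‖) := by gcongr
    _ = ‖x‖ * (|1 + θ| * d * ‖j‖ / 2) := by ring
    _ ≤ (1 / 2) * ‖x‖ ^ 2 + (1 / 2) * (|1 + θ| * d * ‖j‖ / 2) ^ 2 := by
        nlinarith [sq_nonneg (‖x‖ - |1 + θ| * d * ‖j‖ / 2)]
    _ = (1 / 2) * ‖x‖ ^ 2 + ((1 / 2) * (1 + θ) ^ 2 * d ^ 2) / 4 * ‖j‖ ^ 2 := by
        rw [div_pow, mul_pow, mul_pow, sq_abs]; ring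
    _ ≤ (1 / 2) * ‖x‖ ^ 2 + γ / 4 * ‖j‖ ^ 2 := by gcongr

-- `grad κ`, `nflx κ`, `jmp κ`, `m κ` model `∇v|_κ`, `∇v·n_κ|_{∂κ}`, `⟦v⟧|_{∂κ}` and the mean `Π₀v` on `κ`.
theorem stmt_7_general {ι H : Type*} [Fintype ι] [AddCommGroup H] [Module ℝ H]
    (G B : ι → Type*) [∀ κ, NormedAddCommGroup (G κ)] [∀ κ, InnerProductSpace ℝ (G κ)]
    [∀ κ, NormedAddCommGroup (B κ)] [∀ κ, InnerProductSpace ℝ (B κ)]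
    (grad : ∀ κ, H →ₗ[ℝ] G κ) (nflx jmp : ∀ κ, H →ₗ[ℝ] B κ) (m : ∀ κ, H →ₗ[ℝ] ℝ)
    (VN : Submodule ℝ H)
    (θ : ℝ) (γ dk : ι → ℝ)
    (e : ι → H)
    (he : ∀ κ, e κ ∈ VN ∧ grad κ (e κ) = 0 ∧ nflx κ (e κ) = 0 ∧ m κ (e κ) ≠ 0)
    (hd : ∀ κ, ∀ v ∈ VN, ‖nflx κ v‖ ≤ dk κ * Real.sqrt ((m κ v)^2 + ‖grad κ v‖^2))
    (hγ : ∀ κ, (1/2) * (1+θ)^2 * (dk κ)^2 ≤ γ κ)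
    (A : H → H → ℝ)
    (hA : ∀ w v, A w v = ∑ κ : ι, (⟪grad κ w, grad κ v⟫
        - (1/2) * ⟪nflx κ w, jmp κ v⟫
        - (θ/2) * ⟪nflx κ v, jmp κ w⟫
        + (γ κ / 2) * ⟪jmp κ w, jmp κ v⟫))
    (v : H) (hv : v ∈ VN) :
    (1/2) * (∑ κ : ι, (‖grad κ v‖^2 + (γ κ / 2) * ‖jmp κ v‖^2)) ≤ A v v := by
  rw [hA, Finset.mul_sum]
  refine Finset.sum_le_sum fun κ _ => ?_
  obtain ⟨heV, hge, hne, hme⟩ := he κ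
  have htrace : ‖nflx κ v‖ ≤ dk κ * ‖grad κ v‖ :=
    norm_le_mul_norm_of_le_mul_starNorm (nflx κ) (grad κ) (m κ) (hd κ) heV hne hge hme hv
  have hcross := mul_inner_le_of_norm_le (j := jmp κ v) htrace (hγ κ)
  rw [real_inner_self_eq_norm_sq, real_inner_self_eq_norm_sq]
  linarith

/-- coercivity of the interior penalty DG form.
Abstract model of the broken space: `H` is the broken Sobolev space, and for each element
`κ : ι`, `G κ` models `L²(κ)^d` and `B κ` models `L²(∂κ)`; `grad κ v = ∇v|_κ`,
`nflx κ v = ∇v·n_κ|_{∂κ}`, `jmp κ v = ⟦v⟧·n_κ|_{∂κ}`, and `m κ` the mean functional so that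
`‖v‖_⋆² = (m κ v)² + ‖grad κ v‖²`.  `V_N` is the broken approximation space, containing the
constants (witnesses `e κ`), `d_κ` is the local inverse trace constant (so that
`‖∇v_N·n_κ‖_{∂κ} ≤ d_κ ‖v_N‖_⋆` on `V_N`), and the penalty satisfies
`γ_κ ≥ ½(1+θ)² d_κ²`.  `A` is the interior penalty bilinear form
`a(w,v) = ∑_κ [(∇w,∇v)_κ − ½(∇w,⟦v⟧)_{∂κ} − (θ/2)(⟦w⟧,∇v)_{∂κ} + (γ_κ/2)(⟦w⟧,⟦v⟧)_{∂κ}]`.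
Conclusion: `½ |||v_N|||² ≤ a(v_N, v_N)` with
`|||v|||² = ∑_κ [‖∇v‖²_κ + (γ_κ/2)‖⟦v⟧‖²_{∂κ}]`. -/
theorem stmt_7 {ι H : Type*} [Fintype ι] [AddCommGroup H] [Module ℝ H]
    (G B : ι → Type*) [∀ κ, NormedAddCommGroup (G κ)] [∀ κ, InnerProductSpace ℝ (G κ)]
    [∀ κ, NormedAddCommGroup (B κ)] [∀ κ, InnerProductSpace ℝ (B κ)]
    (grad : ∀ κ, H →ₗ[ℝ] G κ) (nflx jmp : ∀ κ, H →ₗ[ℝ] B κ) (m : ∀ κ, H →ₗ[ℝ] ℝ)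
    (VN : Submodule ℝ H) (hVN : FiniteDimensional ℝ VN)
    (θ : ℝ) (γ dk : ι → ℝ) (hγpos : ∀ κ, 0 < γ κ)
    (e : ι → H)
    (he : ∀ κ, e κ ∈ VN ∧ grad κ (e κ) = 0 ∧ nflx κ (e κ) = 0 ∧ m κ (e κ) ≠ 0)
    (hd : ∀ κ, ∀ v ∈ VN, ‖nflx κ v‖ ≤ dk κ * Real.sqrt ((m κ v)^2 + ‖grad κ v‖^2))
    (hγ : ∀ κ, (1/2) * (1+θ)^2 * (dk κ)^2 ≤ γ κ)
    (A : H → H → ℝ)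
    (hA : ∀ w v, A w v = ∑ κ : ι, (⟪grad κ w, grad κ v⟫
        - (1/2) * ⟪nflx κ w, jmp κ v⟫
        - (θ/2) * ⟪nflx κ v, jmp κ w⟫
        + (γ κ / 2) * ⟪jmp κ w, jmp κ v⟫))
    (v : H) (hv : v ∈ VN) :
    (1/2) * (∑ κ : ι, (‖grad κ v‖^2 + (γ κ / 2) * ‖jmp κ v‖^2)) ≤ A v v :=
  stmt_7_general G B grad nflx jmp m VN θ γ dk e he hd hγ A hA v hv
end

section
/- In 1D, let κ = [a,b] and V_N(p;κ) = span{x^j : 0 ≤ j ≤ p} with p ≥ 2. Then the constant b_κ = sup{ ‖v‖_{L²(∂κ)}/‖v‖_⋆ : v ∈ H¹(κ), v ⊥_⋆ V_N(p;κ), v ≠ 0 } equals 0; equivalently, every v ∈ H¹([a,b]) that is ⋆-orthogonal to all polynomials of degree ≤ 2 satisfies v(a) = v(b) = 0. -/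
/-! Testing the ⋆-orthogonality against `1`, `X` and `X²` gives `∫ v = 0`, `∫ v' = 0` and
`∫ x v'(x) = 0`. The second says `v b = v a`; integrating the third by parts and using the first
gives `b v(b) = a v(a)`, and the two together force `v a = v b = 0` since `a ≠ b`. -/

open intervalIntegral Polynomial

section BoundaryValues

variable {a b : ℝ} {v v' : ℝ → ℝ}

theorem integral_id_mul_deriv_eq (hder : ∀ x ∈ Set.uIcc a b, HasDerivAt v (v' x) x)
    (hint : IntervalIntegrable v' MeasureTheory.volume a b) :
    ∫ x in a..b, x * v' x = b * v b - a * v a - ∫ x in a..b, v x := by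
  simpa using integral_mul_deriv_eq_deriv_mul (fun x _ => hasDerivAt_id x) hder
    intervalIntegrable_const hint

theorem boundary_values_eq_zero_of_moments_eq_zero (hab : a ≠ b)
    (hder : ∀ x ∈ Set.uIcc a b, HasDerivAt v (v' x) x)
    (hint : IntervalIntegrable v' MeasureTheory.volume a b)
    (hmean : ∫ x in a..b, v x = 0) (h₀ : ∫ x in a..b, v' x = 0)
    (h₁ : ∫ x in a..b, x * v' x = 0) :
    v a = 0 ∧ v b = 0 := by
  have hvab : v b = v a := by
    linarith [integral_eq_sub_of_hasDerivAt hder hint]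
  have hweighted : b * v b = a * v a := by
    linarith [integral_id_mul_deriv_eq hder hint]
  have hva : v a = 0 := by
    have : (b - a) * v a = 0 := by linear_combination hweighted - b * hvab
    exact (mul_eq_zero.mp this).resolve_left (sub_ne_zero.mpr hab.symm)
  exact ⟨hva, hvab.trans hva⟩

end BoundaryValues

/-- Proposition `prop:rbk1D`.  In 1D, on `κ = [a,b]`, every `v ∈ H¹([a,b])`
(modeled as a function differentiable on `[a,b]` with interval-integrable derivative `v'`)
that is ⋆-orthogonal to the space `V_N(p;κ)` of polynomials of degree ≤ `p`, `p ≥ 2`, in the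
inner product `⟨v,w⟩_⋆ = (Π₀v)(Π₀w)(b−a) + ∫_a^b v'w'` with `Π₀v = (1/(b−a))∫_a^b v`,
satisfies `v(a) = v(b) = 0`; hence `‖v‖_{L²(∂κ)} = 0` and the constant `b_κ` equals `0`. -/
theorem stmt_16 (a b : ℝ) (hab : a < b) (p : ℕ) (hp : 2 ≤ p)
    (v v' : ℝ → ℝ)
    (hder : ∀ x ∈ Set.Icc a b, HasDerivAt v (v' x) x)
    (hint : IntervalIntegrable v' MeasureTheory.volume a b)
    (horth : ∀ c : Polynomial ℝ, c.natDegree ≤ p →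
      ((∫ x in a..b, v x) / (b - a)) * ((∫ x in a..b, Polynomial.eval x c) / (b - a)) * (b - a)
        + ∫ x in a..b, v' x * Polynomial.eval x (Polynomial.derivative c) = 0) :
    v a = 0 ∧ v b = 0 := by
  have hne : b - a ≠ 0 := sub_ne_zero.mpr hab.ne'
  have hmean : ∫ x in a..b, v x = 0 := by
    simpa [div_self hne, div_mul_cancel₀ _ hne] using horth 1 (by simp)
  have hgrad (c : ℝ[X]) (hc : c.natDegree ≤ p) :
      ∫ x in a..b, v' x * (derivative c).eval x = 0 := by
    simpa [hmean] using horth c hc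
  have h₀ : ∫ x in a..b, v' x = 0 := by
    simpa using hgrad X (natDegree_X_le.trans (by omega))
  have h₁ : ∫ x in a..b, x * v' x = 0 :=
    calc ∫ x in a..b, x * v' x
        = 2⁻¹ * ∫ x in a..b, v' x * (derivative (X ^ 2 : ℝ[X])).eval x := by
          rw [← integral_const_mul]
          congr 1 with x
          simp only [derivative_X_pow, eval_mul, eval_C, eval_pow, eval_X]
          norm_num
          ring
      _ = 0 := by rw [hgrad _ (natDegree_X_pow_le 2 |>.trans hp), mul_zero]
  exact boundary_values_eq_zero_of_moments_eq_zero hab.ne (by rwa [Set.uIcc_of_le hab.le]) hint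
    hmean h₀ h₁
end
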